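/- arXiv:2505.01569 — 2 statements merged into one kernel-verified Lean document; each statement's English description precedes it below -/
import Mathlib

section
/- Let x, x_d : ℝ → ℝⁿ be differentiable, set x̄ = x − x_d, and suppose x satisfies ẋ(t) = μ(x(t)) + G(x(t)) u(t) + η(x(t)), where μ, η : ℝⁿ → ℝⁿ, and for each state the matrix G(x) ∈ ℝ^{n×m} has full column rank m and G⊥(x) ∈ ℝ^{(n−m)×n} is a full-rank left annihilator of G(x). Let F_d(t) ∈ ℝⁿ denote the desired drift [J_d(x̄(t)) − R_d(x̄(t))]∇H_d evaluated along the trajectory. Assume the matching equation G⊥(x(t)) μ(x(t)) = G⊥(x(t)) (F_d(t) + ẋ_d(t)) holds for all t, and that the control input is u(t) = (G(x(t))ᵀG(x(t)))⁻¹ G(x(t))ᵀ (F_d(t) + ẋ_d(t) − μ(x(t))). Then the tracking error satisfies ẋ̄(t) = F_d(t) + η(x(t)) for all t. -/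
open Matrix

lemma key_Gu (n m : ℕ)
    (G : Matrix (Fin n) (Fin m) ℝ)
    (Gperp : Matrix (Fin (n - m)) (Fin n) ℝ)
    (hGrank : G.rank = m)
    (hGperpG : Gperp * G = 0)
    (hGperprank : Gperp.rank = n - m)
    (w : Fin n → ℝ) (hw : Gperp.mulVec w = 0) :
    G.mulVec (((Gᵀ * G)⁻¹ * Gᵀ).mulVec w) = w := by
  have hmn : m ≤ n := by
    have := G.rank_le_card_height
    simpa [hGrank] using this
  -- w is in the range of G.mulVecLin
  have hrange : LinearMap.range G.mulVecLin = LinearMap.ker Gperp.mulVecLin := by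
    apply Submodule.eq_of_le_of_finrank_eq
    · rintro _ ⟨v, rfl⟩
      simp only [LinearMap.mem_ker, mulVecLin_apply, mulVec_mulVec]
      rw [← mulVec_mulVec, ← mulVecLin_apply Gperp, ← mulVecLin_apply G]
      show (Gperp.mulVecLin ∘ₗ G.mulVecLin) v = 0
      rw [← mulVecLin_mul, hGperpG]
      simp
    · have h1 : Module.finrank ℝ (LinearMap.range G.mulVecLin) = m := hGrank
      have h2 := LinearMap.finrank_range_add_finrank_ker Gperp.mulVecLin
      have h3 : Module.finrank ℝ (LinearMap.range Gperp.mulVecLin) = n - m :=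
        hGperprank
      have h4 : Module.finrank ℝ (Fin n → ℝ) = n := by simp
      rw [h3, h4] at h2
      rw [h1]
      omega
  have hwmem : w ∈ LinearMap.range G.mulVecLin := by
    rw [hrange]
    simpa using hw
  obtain ⟨v, rfl⟩ := hwmem
  -- GᵀG is invertible
  have hker : LinearMap.ker G.mulVecLin = ⊥ := by
    have h2 := LinearMap.finrank_range_add_finrank_ker G.mulVecLin
    have h1 : Module.finrank ℝ (LinearMap.range G.mulVecLin) = m := hGrank
    rw [h1] at h2
    simp only [Module.finrank_pi, Fintype.card_fin] at h2 ⊢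
    exact Submodule.finrank_eq_zero.mp (by omega)
  have hinj : Function.Injective G.mulVec := by
    intro a b hab
    have : G.mulVecLin a = G.mulVecLin b := hab
    exact LinearMap.ker_eq_bot.mp hker this
  have hGTG : IsUnit (Gᵀ * G) := by
    rw [← Matrix.mulVec_injective_iff_isUnit]
    intro a b hab
    apply hinj
    have h : (Gᵀ * G).mulVec (a - b) = 0 := by
      rw [mulVec_sub, hab, sub_self]
    have hmem : a - b ∈ LinearMap.ker (Gᵀ * G).mulVecLin := h
    rw [Matrix.ker_mulVecLin_transpose_mul_self] at hmem
    have : G.mulVec (a - b) = 0 := hmem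
    rw [mulVec_sub, sub_eq_zero] at this
    exact this
  simp only [mulVecLin_apply, mulVec_mulVec]
  rw [Matrix.mul_assoc ((Gᵀ * G)⁻¹),
    Matrix.nonsing_inv_mul _ (isUnit_iff_isUnit_det _ |>.mp hGTG), Matrix.mul_one]

/-- Closed-loop derivation in the proof of Theorem 1: if `x` satisfies
`ẋ = μ(x) + G(x)u + η(x)`, `G(x)` has full column rank with full-rank left annihilator
`G⊥(x)`, the matching equation `G⊥(x)μ(x) = G⊥(x)(F_d + ẋ_d)` holds along the trajectory,
and the control is `u = (GᵀG)⁻¹Gᵀ(F_d + ẋ_d − μ(x))`, then the tracking error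
`x̄ = x − x_d` satisfies `ẋ̄ = F_d + η(x)`. -/
theorem closed_loop_tracking_error_dynamics
    (n m : ℕ)
    (μ η : (Fin n → ℝ) → (Fin n → ℝ))
    (G : (Fin n → ℝ) → Matrix (Fin n) (Fin m) ℝ)
    (Gperp : (Fin n → ℝ) → Matrix (Fin (n - m)) (Fin n) ℝ)
    (hGrank : ∀ z, (G z).rank = m)
    (hGperpG : ∀ z, Gperp z * G z = 0)
    (hGperprank : ∀ z, (Gperp z).rank = n - m)
    (x xd : ℝ → Fin n → ℝ) (xd' : ℝ → Fin n → ℝ)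
    (u : ℝ → Fin m → ℝ)
    (Fd : ℝ → Fin n → ℝ)
    (hxd : ∀ t, HasDerivAt xd (xd' t) t)
    (hx : ∀ t, HasDerivAt x (μ (x t) + (G (x t)).mulVec (u t) + η (x t)) t)
    (hmatch : ∀ t, (Gperp (x t)).mulVec (μ (x t)) =
      (Gperp (x t)).mulVec (Fd t + xd' t))
    (hu : ∀ t, u t =
      (((G (x t))ᵀ * G (x t))⁻¹ * (G (x t))ᵀ).mulVec (Fd t + xd' t - μ (x t))) :
    ∀ t, HasDerivAt (fun s => x s - xd s) (Fd t + η (x t)) t := by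
  intro t
  have hw : (Gperp (x t)).mulVec (Fd t + xd' t - μ (x t)) = 0 := by
    rw [mulVec_sub, hmatch t, sub_self]
  have hGu : (G (x t)).mulVec (u t) = Fd t + xd' t - μ (x t) := by
    rw [hu t]
    exact key_Gu n m (G (x t)) (Gperp (x t)) (hGrank _) (hGperpG _)
      (hGperprank _) _ hw
  have := (hx t).sub (hxd t)
  refine this.congr_deriv ?_
  rw [hGu]
  abel
end

section
/- (Corollary 1, semi-passivity.) In the setting of the dissipation identity — x̄ : [0,∞) → ℝⁿ differentiable with ẋ̄(t) = [J_d(x̄(t)) − R_d(x̄(t))]∇H_d(x̄(t)) + η̃(t) + Ĝ(x̄(t)) u_ex(t), J_d(z) skew-symmetric, y_ex(t) = Ĝ(x̄(t))ᵀ∇H_d(x̄(t)) — assume additionally that there is ε > 0 such that ∇H_d(x̄(t))ᵀ η̃(t) ≤ ∇H_d(x̄(t))ᵀ R_d(x̄(t)) ∇H_d(x̄(t)) whenever ‖x̄(t)‖ ≥ ε. Then the supply-rate inequality d/dt H_d(x̄(t)) ≤ y_ex(t)ᵀ u_ex(t) holds for every t with ‖x̄(t)‖ ≥ ε; i.e.,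 the closed-loop system is semi-passive with respect to input u_ex and output y_ex with storage function H_d. -/
open Matrix

/-- Corollary 1, semi-passivity: for the tracking-error dynamics with external input,
`ẋ̄ = [J_d(x̄) − R_d(x̄)]∇H_d(x̄) + η̃ + Ĝ(x̄)u_ex`, output `y_ex = Ĝ(x̄)ᵀ∇H_d(x̄)`, if the
damping-domination inequality `∇H_dᵀη̃ ≤ ∇H_dᵀR_d∇H_d` holds whenever `‖x̄(t)‖ ≥ ε`, then
the supply-rate inequality `d/dt H_d(x̄(t)) ≤ y_ex(t)ᵀ u_ex(t)` holds for every `t ≥ 0`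
with `‖x̄(t)‖ ≥ ε`: the closed loop is semi-passive with storage function `H_d`. -/
theorem semi_passivity_with_external_input
    (n m : ℕ)
    (Hd : EuclideanSpace ℝ (Fin n) → ℝ)
    (gradHd : EuclideanSpace ℝ (Fin n) → EuclideanSpace ℝ (Fin n))
    (hHd : ContDiff ℝ 1 Hd)
    (hgrad : ∀ z, HasGradientAt Hd (gradHd z) z)
    (Jd Rd : EuclideanSpace ℝ (Fin n) → Matrix (Fin n) (Fin n) ℝ)
    (hJd : ∀ z, (Jd z)ᵀ = -(Jd z))
    (Ghat : EuclideanSpace ℝ (Fin n) → Matrix (Fin n) (Fin m) ℝ)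
    (ηt : ℝ → (Fin n → ℝ))
    (uex : ℝ → Fin m → ℝ)
    (xbar : ℝ → EuclideanSpace ℝ (Fin n))
    (hx : ∀ t ∈ Set.Ici (0 : ℝ), HasDerivWithinAt xbar
      (WithLp.toLp 2 ((Jd (xbar t) - Rd (xbar t)).mulVec (gradHd (xbar t)) + ηt t
        + (Ghat (xbar t)).mulVec (uex t))) (Set.Ici 0) t)
    (yex : ℝ → Fin m → ℝ)
    (hyex : ∀ t, yex t = (Ghat (xbar t))ᵀ.mulVec (gradHd (xbar t)))
    (ε : ℝ) (hε : 0 < ε)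
    (hdamp : ∀ t ∈ Set.Ici (0 : ℝ), ε ≤ ‖xbar t‖ →
      gradHd (xbar t) ⬝ᵥ ηt t ≤
        gradHd (xbar t) ⬝ᵥ (Rd (xbar t)).mulVec (gradHd (xbar t))) :
    ∀ t ∈ Set.Ici (0 : ℝ), ε ≤ ‖xbar t‖ →
      derivWithin (fun s => Hd (xbar s)) (Set.Ici 0) t ≤ yex t ⬝ᵥ uex t := by
  intro t ht hεt
  set g : EuclideanSpace ℝ (Fin n) := gradHd (xbar t) with hg
  set v : EuclideanSpace ℝ (Fin n) :=
    WithLp.toLp 2 ((Jd (xbar t) - Rd (xbar t)).mulVec g + ηt t + (Ghat (xbar t)).mulVec (uex t)) with hv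
  have hfd : HasFDerivAt Hd ((InnerProductSpace.toDual ℝ _) g) (xbar t) :=
    (hgrad (xbar t)).hasFDerivAt
  have hcomp : HasDerivWithinAt (fun s => Hd (xbar s))
      (((InnerProductSpace.toDual ℝ _) g) v) (Set.Ici 0) t :=
    hfd.comp_hasDerivWithinAt t (hx t ht)
  have hdw : derivWithin (fun s => Hd (xbar s)) (Set.Ici 0) t =
      ((InnerProductSpace.toDual ℝ _) g) v :=
    hcomp.derivWithin (uniqueDiffOn_Ici 0 t ht)
  have hinner : ((InnerProductSpace.toDual ℝ _) g) v = g ⬝ᵥ v := by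
    simp [InnerProductSpace.toDual_apply_apply, PiLp.inner_apply, dotProduct,
      RCLike.inner_apply, mul_comm]
  have hskew : g ⬝ᵥ (Jd (xbar t)).mulVec g = 0 := by
    have h1 : g ⬝ᵥ (Jd (xbar t)).mulVec g = (Jd (xbar t))ᵀ.mulVec g ⬝ᵥ g := by
      rw [Matrix.dotProduct_mulVec, Matrix.mulVec_transpose]
    rw [hJd (xbar t)] at h1
    have h2 : (-(Jd (xbar t))).mulVec g ⬝ᵥ g = -(g ⬝ᵥ (Jd (xbar t)).mulVec g) := by
      rw [Matrix.neg_mulVec, neg_dotProduct, dotProduct_comm]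
    have := h1.trans h2
    linarith
  have hsplit : g ⬝ᵥ v =
      g ⬝ᵥ (Jd (xbar t)).mulVec g - g ⬝ᵥ (Rd (xbar t)).mulVec g
        + g ⬝ᵥ ηt t + g ⬝ᵥ (Ghat (xbar t)).mulVec (uex t) := by
    show g ⬝ᵥ ((Jd (xbar t) - Rd (xbar t)).mulVec g + ηt t + (Ghat (xbar t)).mulVec (uex t)) = _
    rw [dotProduct_add, dotProduct_add, Matrix.sub_mulVec,
      dotProduct_sub]
  have hyu : g ⬝ᵥ (Ghat (xbar t)).mulVec (uex t) = yex t ⬝ᵥ uex t := by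
    rw [hyex t, Matrix.dotProduct_mulVec, Matrix.mulVec_transpose]
  rw [hdw, hinner, hsplit, hskew, hyu]
  have := hdamp t ht hεt
  linarith
end
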